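/- Let T > 0 and let u : ℝ × ℝ → ℝ be smooth, with u(t, x + T) = u(t, x) for all t, x, and suppose u satisfies the KdV equation 4·∂ₜu = 6·u·∂ₓu − ∂ₓ³u. Then the function t ↦ ∫₀ᵀ u(t, x)² dx is constant. (Conservation of the KdV integral H₁.) -/

import Mathlib

open Function MeasureTheory Metric Set
open scoped ContDiff

/-!
Along a solution, `∂ₜ(u²) = 2 u ∂ₜu = u (6 u ∂ₓu - ∂ₓ³u) / 2` is the exact `x`-derivative of the
flux `u³ - u ∂ₓ²u / 2 + (∂ₓu)² / 4`. Differentiating under the integral sign, the derivative of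
`t ↦ ∫₀ᵀ u(t,x)² dx` is therefore the increment of a `T`-periodic function over a period, i.e. `0`.
-/

theorem Function.Periodic.deriv {𝕜 F : Type*} [NontriviallyNormedField 𝕜] [NormedAddCommGroup F]
    [NormedSpace 𝕜 F] {f : 𝕜 → F} {c : 𝕜} (h : Periodic f c) : Periodic (deriv f) c := fun x => by
  rw [← deriv_comp_add_const, h.funext]

theorem Function.Periodic.intervalIntegral_eq_zero_of_hasDerivAt {E : Type*}
    [NormedAddCommGroup E] [NormedSpace ℝ E] [CompleteSpace E] {G g : ℝ → E} {T : ℝ}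
    (hG : Periodic G T) (hderiv : ∀ x, HasDerivAt G (g x) x) (a : ℝ)
    (hg : IntervalIntegrable g volume a (a + T)) : ∫ x in a..a + T, g x = 0 := by
  rw [intervalIntegral.integral_eq_sub_of_hasDerivAt (fun x _ => hderiv x) hg, hG a, sub_self]

section PartialDerivatives

variable {E : Type*} [NormedAddCommGroup E] [NormedSpace ℝ E] {n : WithTop ℕ∞}

theorem ContDiff.uncurry_deriv {X : Type*} [NormedAddCommGroup X] [NormedSpace ℝ X]
    {u : X → ℝ → E} (hu : ContDiff ℝ (n + 1) (uncurry u)) :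
    ContDiff ℝ n (uncurry fun t => deriv (u t)) := by
  have hu' : ContDiff ℝ (n + 1) (uncurry fun (p : X × ℝ) y => u p.1 y) :=
    hu.comp (contDiff_fst.fst.prodMk contDiff_snd)
  exact hu'.fderiv_apply contDiff_snd contDiff_const le_rfl

theorem ContDiff.uncurry_deriv_left {u : ℝ → ℝ → E} (hu : ContDiff ℝ (n + 1) (uncurry u)) :
    ContDiff ℝ n (uncurry fun t x => deriv (fun s => u s x) t) :=
  have hswap {m : WithTop ℕ∞} : ContDiff ℝ m (Prod.swap : ℝ × ℝ → ℝ × ℝ) :=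
    contDiff_snd.prodMk contDiff_fst
  (ContDiff.uncurry_deriv (u := flip u) (hu.comp hswap)).comp hswap

end PartialDerivatives

theorem intervalIntegral.hasDerivAt_integral_of_continuous_deriv {E : Type*}
    [NormedAddCommGroup E] [NormedSpace ℝ E] [CompleteSpace E] {F F' : ℝ → ℝ → E}
    (hF : ∀ t, Continuous (F t)) (hF' : Continuous (uncurry F'))
    (hderiv : ∀ t x, HasDerivAt (fun s => F s x) (F' t x) t) (a b t₀ : ℝ) :
    HasDerivAt (fun t => ∫ x in a..b, F t x) (∫ x in a..b, F' t₀ x) t₀ := by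
  obtain ⟨C, hC⟩ : ∃ C, ∀ p ∈ closedBall t₀ 1 ×ˢ uIcc a b, ‖uncurry F' p‖ ≤ C :=
    ((isCompact_closedBall t₀ 1).prod isCompact_uIcc).exists_bound_of_continuousOn
      hF'.continuousOn
  have hF't₀ : Continuous (F' t₀) := hF'.comp (continuous_const.prodMk continuous_id)
  refine (hasDerivAt_integral_of_dominated_loc_of_deriv_le (bound := fun _ => C)
    (ball_mem_nhds t₀ one_pos) (.of_forall fun t => (hF t).aestronglyMeasurable)
    ((hF t₀).intervalIntegrable a b) hF't₀.aestronglyMeasurable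
    (.of_forall fun x hx t ht => hC (t, x) ⟨ball_subset_closedBall ht, uIoc_subset_uIcc hx⟩)
    intervalIntegrable_const (.of_forall fun x _ t _ => hderiv t x)).2

noncomputable def kdvFlux (f : ℝ → ℝ) (x : ℝ) : ℝ :=
  f x ^ 3 - f x * deriv (deriv f) x / 2 + deriv f x ^ 2 / 4

theorem Function.Periodic.kdvFlux {f : ℝ → ℝ} {T : ℝ} (h : Periodic f T) :
    Periodic (kdvFlux f) T := fun x => by
  simp only [_root_.kdvFlux, h x, h.deriv x, h.deriv.deriv x]

theorem hasDerivAt_kdvFlux {f : ℝ → ℝ} (hf : ContDiff ℝ 3 f) (x : ℝ) :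
    HasDerivAt (kdvFlux f) (f x * (6 * f x * deriv f x - deriv (deriv (deriv f)) x) / 2) x := by
  have hf₁ : ContDiff ℝ 2 (deriv f) := hf.deriv'
  have hf₂ : ContDiff ℝ 1 (deriv (deriv f)) := hf₁.deriv'
  have h₀ := (hf.differentiable (by norm_num) x).hasDerivAt
  have h₁ := (hf₁.differentiable (by norm_num) x).hasDerivAt
  have h₂ := (hf₂.differentiable (by norm_num) x).hasDerivAt
  refine (((h₀.pow 3).sub ((h₀.mul h₂).div_const 2)).add ((h₁.pow 2).div_const 4)).congr_deriv ?_
  push_cast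
  ring

theorem kdv_conservation_H1_general (T : ℝ) (u : ℝ → ℝ → ℝ)
    (hu : ContDiff ℝ (⊤ : ℕ∞) (Function.uncurry u))
    (hper : ∀ t x, u t (x + T) = u t x)
    (hkdv : ∀ t x, 4 * deriv (fun s => u s x) t =
      6 * u t x * deriv (u t) x - deriv (deriv (deriv (u t))) x) :
    ∀ t₁ t₂ : ℝ, (∫ x in (0:ℝ)..T, (u t₁ x) ^ 2) = ∫ x in (0:ℝ)..T, (u t₂ x) ^ 2 := by
  let uₜ t x := deriv (fun s => u s x) t
  have hu_slice t : ContDiff ℝ ∞ (u t) := hu.comp (contDiff_const.prodMk contDiff_id)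
  have huₜ : Continuous (uncurry uₜ) :=
    (ContDiff.uncurry_deriv_left (n := ∞) (by rwa [ENat.coe_top_add_one])).continuous
  have hderiv_t t x : HasDerivAt (fun s => u s x) (uₜ t x) t :=
    ((hu.comp (contDiff_id.prodMk contDiff_const)).differentiable (by simp) t).hasDerivAt
  have hH_deriv t :
      HasDerivAt (fun t => ∫ x in 0..T, u t x ^ 2) (∫ x in 0..T, 2 * u t x * uₜ t x) t :=
    intervalIntegral.hasDerivAt_integral_of_continuous_deriv
      (fun t => (hu_slice t).continuous.pow 2) (F' := fun t x => 2 * u t x * uₜ t x) (by fun_prop)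
      (fun t x => ((hderiv_t t x).fun_pow 2).congr_deriv (by ring)) 0 T t
  have hflux t x : HasDerivAt (kdvFlux (u t)) (2 * u t x * uₜ t x) x :=
    (hasDerivAt_kdvFlux ((hu_slice t).of_le ENat.LEInfty.out) x).congr_deriv
      (by rw [← hkdv]; ring)
  have h_integral_zero t : ∫ x in 0..T, 2 * u t x * uₜ t x = 0 := by
    simpa using (Periodic.kdvFlux (hper t)).intervalIntegral_eq_zero_of_hasDerivAt (hflux t) 0
      ((by fun_prop : Continuous fun x => 2 * u t x * uₜ t x).intervalIntegrable _ _)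
  exact is_const_of_deriv_eq_zero (fun t => (hH_deriv t).differentiableAt)
    fun t => (hH_deriv t).deriv.trans (h_integral_zero t)

/-- Conservation of the KdV integral `H₁`: if `u(t,x)` is smooth, `T`-periodic in `x`,
and satisfies the KdV equation `4 ∂ₜu = 6 u ∂ₓu - ∂ₓ³u`, then `t ↦ ∫₀ᵀ u(t,x)² dx`
is constant. -/
theorem kdv_conservation_H1 (T : ℝ) (hT : 0 < T) (u : ℝ → ℝ → ℝ)
    (hu : ContDiff ℝ (⊤ : ℕ∞) (Function.uncurry u))
    (hper : ∀ t x, u t (x + T) = u t x)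
    (hkdv : ∀ t x, 4 * deriv (fun s => u s x) t =
      6 * u t x * deriv (u t) x - deriv (deriv (deriv (u t))) x) :
    ∀ t₁ t₂ : ℝ, (∫ x in (0:ℝ)..T, (u t₁ x) ^ 2) = ∫ x in (0:ℝ)..T, (u t₂ x) ^ 2 :=
  kdv_conservation_H1_general T u hu hper hkdv
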